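/- Let A = (Q, Σ, δ, s, F) be a DFA in which the initial state s has no incoming transitions and every state is reachable from s, with n = |Q|. For any two strings α, β in the set {inf I_u : u ∈ Q} ∪ {sup I_u : u ∈ Q}, it holds that α < β in the co-lex order if and only if suf_{2n}(α) < suf_{2n}(β) in the co-lex order. -/

import Mathlib

/-- A (possibly left-infinite) string over alphabet `A`, indexed from the END:
`f i` is the `i`-th character from the right, and `⊥` means the position is
past the beginning of the string.  The elements of `Σ* ∪ Σ^ω` are the
well-formed (`CStr.WF`) such functions. -/
abbrev CStr (A : Type*) := ℕ → WithBot A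

/-- Well-formed: once we run out of characters going leftwards, it stays so. -/
def CStr.WF {A : Type*} (f : CStr A) : Prop := ∀ i, f i = ⊥ → f (i + 1) = ⊥

/-- The string is finite (an element of `Σ*`). -/
def CStr.Finite {A : Type*} (f : CStr A) : Prop := ∃ i, f i = ⊥

/-- Length of a finite string. -/
noncomputable def CStr.length {A : Type*} (f : CStr A) : ℕ := sInf {i | f i = ⊥}

/-- A finite string, given as a list read left-to-right, viewed as a `CStr`. -/
def CStr.ofList {A : Type*} (w : List A) : CStr A := fun i =>
  if h : i < w.length then (w.get ⟨w.length - 1 - i, by omega⟩ : WithBot A) else ⊥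

/-- The co-lexicographic (strict) order on `Σ* ∪ Σ^ω`: compare the last
characters first (position `0`), a missing character (`⊥`) being smaller
than every character of the alphabet. -/
def colexLt {A : Type*} [LinearOrder A] (f g : CStr A) : Prop :=
  ∃ i, (∀ j, j < i → f j = g j) ∧ f i < g i

/-- The non-strict co-lex order. -/
def colexLe {A : Type*} [LinearOrder A] (f g : CStr A) : Prop := colexLt f g ∨ f = g

/-- `g` is the greatest lower bound (infimum) of `S` in `(Σ* ∪ Σ^ω, ≤)`. -/
def IsColexGLB {A : Type*} [LinearOrder A] (S : Set (CStr A)) (g : CStr A) : Prop :=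
  g.WF ∧ (∀ f ∈ S, colexLe g f) ∧ ∀ h, CStr.WF h → (∀ f ∈ S, colexLe h f) → colexLe h g

/-- `g` is the least upper bound (supremum) of `S` in `(Σ* ∪ Σ^ω, ≤)`. -/
def IsColexLUB {A : Type*} [LinearOrder A] (S : Set (CStr A)) (g : CStr A) : Prop :=
  g.WF ∧ (∀ f ∈ S, colexLe f g) ∧ ∀ h, CStr.WF h → (∀ f ∈ S, colexLe f h) → colexLe g h

/-- A DFA `(Q, A, δ, start, accept)` with a partial transition function. -/
structure PDFA (A Q : Type*) where
  δ : Q → A → Option Q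
  start : Q
  accept : Set Q

/-- The transition function extended to finite strings (read left-to-right). -/
def PDFA.δStar {A Q : Type*} (M : PDFA A Q) : Q → List A → Option Q
  | q, [] => some q
  | q, a :: w => (M.δ q a).bind fun q' => M.δStar q' w

/-- `I_u`: the set of finite strings reaching `u` from the initial state. -/
def PDFA.I {A Q : Type*} (M : PDFA A Q) (u : Q) : Set (List A) :=
  {w | M.δStar M.start w = some u}

/-- The initial state has no incoming transitions. -/
def PDFA.NoIncomingStart {A Q : Type*} (M : PDFA A Q) : Prop :=
  ∀ v a, M.δ v a ≠ some M.start

/-- Every state is reachable from the initial state. -/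
def PDFA.Reachable {A Q : Type*} (M : PDFA A Q) : Prop :=
  ∀ u, ∃ w : List A, M.δStar M.start w = some u

/-- Input consistency: all transitions entering a state `u` carry the same
label `lam u`. -/
def PDFA.InputConsistent {A Q : Type*} (M : PDFA A Q) (lam : Q → A) : Prop :=
  ∀ v a u, M.δ v a = some u → lam u = a

/-- The maximum co-lex order `<_A` on the states of a DFA:
`u <_A v` iff `α < β` for every `α ∈ I_u` and every `β ∈ I_v`. -/
def PDFA.colexStateLt {A Q : Type*} [LinearOrder A] (M : PDFA A Q) (u v : Q) : Prop :=
  ∀ α ∈ M.I u, ∀ β ∈ M.I v, colexLt (CStr.ofList α) (CStr.ofList β)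

/-- `suf_k`: the length-`k` suffix of a string; positions `≥ k` are cut off.
(The `⊥` entries at positions `< k` play the role of the left-padding symbol
`#`, which is smaller than every character of the alphabet.) -/
def CStr.suf {A : Type*} (k : ℕ) (f : CStr A) : CStr A := fun i => if i < k then f i else ⊥

/-- `β^ω · α` : the left-infinite string obtained by concatenating infinitely
many copies of `β`, followed (at the right end) by `α`. -/
def CStr.omegaAppend {A : Type*} (b a : List A) : CStr A := fun i =>
  if i < a.length then CStr.ofList a i
  else CStr.ofList b ((i - a.length) % b.length)

/-- Appending one character at the (right) end of a possibly infinite string. -/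
def CStr.snoc {A : Type*} (f : CStr A) (a : A) : CStr A := fun i =>
  match i with
  | 0 => (a : WithBot A)
  | Nat.succ j => f j

/-- Removing the last `k` characters of a string. -/
def CStr.drop {A : Type*} (f : CStr A) (k : ℕ) : CStr A := fun i => f (i + k)

/-- `suf_m(x)` is a prefix of `suf_{2m}(y)`. -/
def ExtPrefix {A : Type*} (x y : CStr A) (m : ℕ) : Prop := ∀ j, j < m → x j = y (m + j)

/-- The set of extenders of `u` at distance `m` (used with `m = 2^k`), where
`g u` denotes the infimum string `inf I_u`:
`P(u) = {v ∈ Q : δ(v, suf_m(inf I_u)) = u ∧ suf_m(inf I_v) is a prefix of suf_{2m}(inf I_u)}`.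
(The first condition is expressed by exhibiting the genuine length-`m` word
`w = suf_m(inf I_u)` over the alphabet; if `inf I_u` is shorter than `m`, the
padded suffix contains `#` and no state can read it, as `# ∉ Σ`.) -/
def PDFA.Pset {A Q : Type*} (M : PDFA A Q) (g : Q → CStr A) (m : ℕ) (u : Q) : Set Q :=
  {v | (∃ w : List A, w.length = m ∧ (∀ j, j < m → CStr.ofList w j = g u j) ∧
          M.δStar v w = some u) ∧ ExtPrefix (g v) (g u) m}


set_option linter.unusedSectionVars false
section AuxBasic
variable {A : Type*} [LinearOrder A]

lemma wf_bot_mono {f : CStr A} (hf : f.WF) {k m : ℕ} (hk : f k = ⊥) (hkm : k ≤ m) :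
    f m = ⊥ := by
  induction hkm with
  | refl => exact hk
  | step _ ih => exact hf _ ih

lemma ofList_wf {w : List A} : (CStr.ofList w).WF := by
  intro i hi
  by_cases h : i < w.length
  · simp [CStr.ofList, h] at hi
  · have : ¬ (i + 1 < w.length) := by omega
    simp [CStr.ofList, this]

lemma ofList_eq_bot_iff {w : List A} {k : ℕ} : CStr.ofList w k = ⊥ ↔ w.length ≤ k := by
  by_cases h : k < w.length
  · simp [CStr.ofList, h]
  · simp [CStr.ofList, h]; omega

lemma colexLe_iff {f g : CStr A} :
    colexLe f g ↔ ∀ i, (∀ j, j < i → f j = g j) → f i ≤ g i := by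
  constructor
  · rintro (⟨i, hagree, hlt⟩ | rfl)
    · intro m hm
      rcases lt_trichotomy m i with h | rfl | h
      · exact (hagree m h).le
      · exact hlt.le
      · exact absurd (hm i h) hlt.ne
    · intro m _; exact le_rfl
  · intro h
    by_cases hfg : f = g
    · exact Or.inr hfg
    · left
      have hne : ∃ i, f i ≠ g i := by
        by_contra hc; push_neg at hc; exact hfg (funext hc)
      refine ⟨Nat.find hne, fun j hj => not_not.mp (Nat.find_min hne hj), ?_⟩
      exact lt_of_le_of_ne (h _ (fun j hj => not_not.mp (Nat.find_min hne hj)))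
        (Nat.find_spec hne)

lemma colex_sandwich {x y z : CStr A} (hxy : colexLe x y) (hyz : colexLe y z)
    {m : ℕ} (hxz : ∀ k, k < m → x k = z k) : ∀ k, k < m → y k = x k := by
  intro k
  induction k using Nat.strong_induction_on with
  | _ k ih =>
    intro hk
    have h1 : x k ≤ y k :=
      colexLe_iff.mp hxy k (fun j hj => (ih j hj (lt_trans hj hk)).symm)
    have h2 : y k ≤ z k :=
      colexLe_iff.mp hyz k (fun j hj => by
        rw [ih j hj (lt_trans hj hk), hxz j (lt_trans hj hk)])
    exact le_antisymm (h2.trans_eq (hxz k hk).symm) h1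

lemma colexLe_drop {f g : CStr A} (h : colexLe f g) {i : ℕ} (hag : ∀ k, k < i → f k = g k) :
    colexLe (fun k => f (k + i)) (fun k => g (k + i)) := by
  rw [colexLe_iff] at h ⊢
  intro m hm
  refine h (m + i) (fun j hj => ?_)
  rcases lt_or_ge j i with h' | h'
  · exact hag j h'
  · have := hm (j - i) (by omega)
    simpa [Nat.sub_add_cancel h'] using this

lemma drop_wf {f : CStr A} (hf : f.WF) (i : ℕ) : CStr.WF (fun k => f (k + i)) := by
  intro k hk
  have := hf (k + i) hk
  simpa [Nat.add_right_comm] using this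

end AuxBasic

section Aux2
variable {A : Type*}

lemma getElem_congr' {α : Type*} (l : List α) {i j : ℕ} (h : i = j) (hi : i < l.length) :
    l[i]'hi = l[j]'(h ▸ hi) := by subst h; rfl

lemma ofList_append_low {z x : List A} {k : ℕ} (hk : k < x.length) :
    CStr.ofList (z ++ x) k = CStr.ofList x k := by
  have h1 : k < (z ++ x).length := by simp; omega
  rw [CStr.ofList, CStr.ofList, dif_pos h1, dif_pos hk]
  simp only [List.get_eq_getElem]
  rw [List.getElem_append_right (by simp; omega)]
  have hL : (z ++ x).length = z.length + x.length := by simp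
  exact congrArg _ (getElem_congr' x (by omega) _)

lemma ofList_append_high {z x : List A} (k : ℕ) :
    CStr.ofList (z ++ x) (k + x.length) = CStr.ofList z k := by
  by_cases hk : k < z.length
  · have h1 : k + x.length < (z ++ x).length := by simp; omega
    rw [CStr.ofList, CStr.ofList, dif_pos h1, dif_pos hk]
    simp only [List.get_eq_getElem]
    have h2 : (z ++ x).length - 1 - (k + x.length) < z.length := by simp; omega
    rw [List.getElem_append_left h2]
    have hL : (z ++ x).length = z.length + x.length := by simp
    exact congrArg _ (getElem_congr' z (by omega) _)
  · have h1 : ¬ (k + x.length < (z ++ x).length) := by simp; omega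
    rw [CStr.ofList, CStr.ofList, dif_neg h1, dif_neg hk]

lemma δStar_append {Q : Type*} (M : PDFA A Q) (q : Q) (y x : List A) :
    M.δStar q (y ++ x) = (M.δStar q y).bind (fun v => M.δStar v x) := by
  induction y generalizing q with
  | nil => simp [PDFA.δStar]
  | cons a y ih =>
    show (M.δ q a).bind _ = ((M.δ q a).bind _).bind _
    cases M.δ q a with
    | none => rfl
    | some q' => exact ih q'

end Aux2

section Approx
variable {A Q : Type*} [LinearOrder A] [Fintype A]

lemma glb_approx (M : PDFA A Q) {u : Q}
    {γ : CStr A} (hglb : IsColexGLB (CStr.ofList '' M.I u) γ)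
    (hne : (M.I u).Nonempty) :
    ∀ J, ∃ w ∈ M.I u, ∀ k, k < J → CStr.ofList w k = γ k := by
  intro J
  induction J with
  | zero => obtain ⟨w, hw⟩ := hne; exact ⟨w, hw, by omega⟩
  | succ J ih =>
    obtain ⟨w, hw, hwa⟩ := ih
    by_cases hex : ∃ w' ∈ M.I u,
        (∀ k, k < J → CStr.ofList w' k = γ k) ∧ CStr.ofList w' J = γ J
    · obtain ⟨w', h1, h2, h3⟩ := hex
      refine ⟨w', h1, fun k hk => ?_⟩
      rcases Nat.lt_succ_iff_lt_or_eq.mp hk with h | rfl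
      exacts [h2 k h, h3]
    · exfalso
      push_neg at hex
      -- every γ-value below J is non-⊥ (else contradiction immediately)
      by_cases hbot : ∃ k, k < J ∧ γ k = ⊥
      · obtain ⟨k, hk, hbk⟩ := hbot
        have h1 : CStr.ofList w k = ⊥ := (hwa k hk).trans hbk
        have h2 : CStr.ofList w J = ⊥ := wf_bot_mono ofList_wf h1 (by omega)
        have h3 : γ J = ⊥ := wf_bot_mono hglb.1 hbk (by omega)
        exact hex w hw hwa (h2.trans h3.symm)
      · push_neg at hbot
        -- the set of values at position J of approximating strings
        set V : Set (WithBot A) :=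
          {c | ∃ w' ∈ M.I u, (∀ k, k < J → CStr.ofList w' k = γ k) ∧
                CStr.ofList w' J = c} with hV
        have hVne : V.Nonempty := ⟨CStr.ofList w J, w, hw, hwa, rfl⟩
        have hVgt : ∀ c ∈ V, γ J < c := by
          rintro c ⟨w', hw', hwa', rfl⟩
          have hle : colexLe γ (CStr.ofList w') := hglb.2.1 _ ⟨w', hw', rfl⟩
          have := colexLe_iff.mp hle J (fun j hj => (hwa' j hj).symm)
          exact lt_of_le_of_ne this (fun hc => hex w' hw' hwa' hc.symm)
        haveI : Finite (WithBot A) := inferInstanceAs (Finite (Option A))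
        obtain ⟨m₀, hm₀V, hm₀min⟩ := Set.exists_min_image V id V.toFinite hVne
        -- the blocking lower bound
        set h : CStr A := fun k => if k < J then γ k else if k = J then m₀ else ⊥ with hh
        have hhwf : h.WF := by
          intro k hk
          rcases lt_trichotomy k J with h1 | heq | h1
          · exact absurd hk (by simpa [hh, h1] using hbot k h1)
          · exfalso
            subst heq
            have hm : (⊥ : WithBot A) < m₀ := bot_le.trans_lt (hVgt m₀ hm₀V)
            simp [hh] at hk
            exact hm.ne' hk
          · simp only [hh]
            rw [if_neg (by omega), if_neg (by omega)]
        have hhlb : ∀ f ∈ CStr.ofList '' M.I u, colexLe h f := by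
          rintro _ ⟨w', hw', rfl⟩
          rw [colexLe_iff]
          intro m hm
          rcases lt_trichotomy m J with h1 | heq | h1
          · have : γ m ≤ CStr.ofList w' m := by
              refine colexLe_iff.mp (hglb.2.1 _ ⟨w', hw', rfl⟩) m (fun j hj => ?_)
              have := hm j hj
              simpa [hh, lt_trans hj h1] using this
            simpa [hh, h1] using this
          · subst heq
            have hwa' : ∀ k, k < m → CStr.ofList w' k = γ k := by
              intro k hk
              have := hm k hk
              simp [hh, hk] at this
              exact this.symm
            have : m₀ ≤ CStr.ofList w' m :=
              hm₀min (CStr.ofList w' m) ⟨w', hw', hwa', rfl⟩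
            simpa [hh] using this
          · simp only [hh]
            rw [if_neg (by omega), if_neg (by omega)]
            exact bot_le
        have hle := hglb.2.2 h hhwf hhlb
        have := colexLe_iff.mp hle J (fun j hj => by simp [hh, hj])
        rw [hh] at this
        simp at this
        exact absurd this (not_le.mpr (hVgt m₀ hm₀V))

end Approx

section Approx2
variable {A Q : Type*} [LinearOrder A] [Fintype A]

lemma lub_approx (M : PDFA A Q) {u : Q}
    {γ : CStr A} (hlub : IsColexLUB (CStr.ofList '' M.I u) γ)
    (hne : (M.I u).Nonempty) :
    ∀ J, ∃ w ∈ M.I u, ∀ k, k < J → CStr.ofList w k = γ k := by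
  intro J
  induction J with
  | zero => obtain ⟨w, hw⟩ := hne; exact ⟨w, hw, by omega⟩
  | succ J ih =>
    obtain ⟨w, hw, hwa⟩ := ih
    by_cases hex : ∃ w' ∈ M.I u,
        (∀ k, k < J → CStr.ofList w' k = γ k) ∧ CStr.ofList w' J = γ J
    · obtain ⟨w', h1, h2, h3⟩ := hex
      refine ⟨w', h1, fun k hk => ?_⟩
      rcases Nat.lt_succ_iff_lt_or_eq.mp hk with h | rfl
      exacts [h2 k h, h3]
    · exfalso
      push_neg at hex
      by_cases hbot : ∃ k, k < J ∧ γ k = ⊥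
      · obtain ⟨k, hk, hbk⟩ := hbot
        have h1 : CStr.ofList w k = ⊥ := (hwa k hk).trans hbk
        have h2 : CStr.ofList w J = ⊥ := wf_bot_mono ofList_wf h1 (by omega)
        have h3 : γ J = ⊥ := wf_bot_mono hlub.1 hbk (by omega)
        exact hex w hw hwa (h2.trans h3.symm)
      · push_neg at hbot
        set V : Set (WithBot A) :=
          {c | ∃ w' ∈ M.I u, (∀ k, k < J → CStr.ofList w' k = γ k) ∧
                CStr.ofList w' J = c} with hV
        have hVne : V.Nonempty := ⟨CStr.ofList w J, w, hw, hwa, rfl⟩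
        have hVlt : ∀ c ∈ V, c < γ J := by
          rintro c ⟨w', hw', hwa', rfl⟩
          have hle : colexLe (CStr.ofList w') γ := hlub.2.1 _ ⟨w', hw', rfl⟩
          have := colexLe_iff.mp hle J (fun j hj => hwa' j hj)
          exact lt_of_le_of_ne this (fun hc => hex w' hw' hwa' hc)
        haveI : Finite (WithBot A) := inferInstanceAs (Finite (Option A))
        obtain ⟨M₀, hM₀V, hM₀max⟩ := Set.exists_max_image V id V.toFinite hVne
        have hγJ : γ J ≠ ⊥ := fun hc => by
          have := hVlt M₀ hM₀V
          rw [hc] at this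
          exact (not_lt_bot this)
        -- the blocking upper bound h
        by_cases hM0 : M₀ = ⊥
        · -- every approximating string ends exactly here: h := γ cut at J
          set h : CStr A := fun k => if k < J then γ k else ⊥ with hh
          have hhwf : h.WF := by
            intro k hk
            rcases lt_or_ge k J with h1 | h1
            · exact absurd hk (by simpa [hh, h1] using hbot k h1)
            · simp only [hh]
              rw [if_neg (by omega)]
          have hhub : ∀ f ∈ CStr.ofList '' M.I u, colexLe f h := by
            rintro _ ⟨w', hw', rfl⟩
            rw [colexLe_iff]
            intro m hm
            rcases lt_or_ge m J with h1 | h1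
            · have : CStr.ofList w' m ≤ γ m := by
                refine colexLe_iff.mp (hlub.2.1 _ ⟨w', hw', rfl⟩) m (fun j hj => ?_)
                have := hm j hj
                simpa [hh, lt_trans hj h1] using this
              simpa [hh, h1] using this
            · have hwa' : ∀ k, k < J → CStr.ofList w' k = γ k := by
                intro k hk
                have := hm k (lt_of_lt_of_le hk h1)
                simp [hh, hk] at this
                exact this
              have h2 : CStr.ofList w' J ≤ M₀ :=
                hM₀max (CStr.ofList w' J) ⟨w', hw', hwa', rfl⟩
              have h3 : CStr.ofList w' J = ⊥ := le_bot_iff.mp (hM0 ▸ h2)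
              have h4 : CStr.ofList w' m = ⊥ := wf_bot_mono ofList_wf h3 h1
              simp [hh, h4]
          have hle := hlub.2.2 h hhwf hhub
          have := colexLe_iff.mp hle J (fun j hj => by simp [hh, hj])
          simp only [hh, lt_irrefl, if_neg (lt_irrefl J)] at this
          exact hγJ (le_bot_iff.mp this)
        · -- general case: pad with the maximum character
          obtain ⟨a, ha⟩ := WithBot.ne_bot_iff_exists.mp hM0
          haveI : Nonempty A := ⟨a⟩
          set amax : A := Finset.univ.max' Finset.univ_nonempty with hamax
          have hamaxle : ∀ c : WithBot A, c ≤ (amax : WithBot A) := by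
            intro c
            cases c with
            | bot => exact bot_le
            | coe b => exact WithBot.coe_le_coe.mpr (Finset.le_max' _ b (Finset.mem_univ b))
          set h : CStr A := fun k => if k < J then γ k else if k = J then M₀ else (amax : WithBot A) with hh
          have hhwf : h.WF := by
            intro k hk
            rcases lt_trichotomy k J with h1 | heq | h1
            · exact absurd hk (by simpa [hh, h1] using hbot k h1)
            · exfalso
              subst heq
              simp only [hh, if_neg (lt_irrefl k), if_pos rfl] at hk
              rw [← ha] at hk
              exact WithBot.coe_ne_bot hk
            · exfalso
              simp only [hh] at hk
              rw [if_neg (by omega), if_neg (by omega)] at hk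
              exact WithBot.coe_ne_bot hk
          have hhub : ∀ f ∈ CStr.ofList '' M.I u, colexLe f h := by
            rintro _ ⟨w', hw', rfl⟩
            rw [colexLe_iff]
            intro m hm
            rcases lt_trichotomy m J with h1 | heq | h1
            · have : CStr.ofList w' m ≤ γ m := by
                refine colexLe_iff.mp (hlub.2.1 _ ⟨w', hw', rfl⟩) m (fun j hj => ?_)
                have := hm j hj
                simpa [hh, lt_trans hj h1] using this
              simpa [hh, h1] using this
            · subst heq
              have hwa' : ∀ k, k < m → CStr.ofList w' k = γ k := by
                intro k hk
                have := hm k hk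
                simp [hh, hk] at this
                exact this
              have : CStr.ofList w' m ≤ M₀ :=
                hM₀max (CStr.ofList w' m) ⟨w', hw', hwa', rfl⟩
              simpa [hh] using this
            · simp only [hh]
              rw [if_neg (by omega), if_neg (by omega)]
              exact hamaxle _
          have hle := hlub.2.2 h hhwf hhub
          have := colexLe_iff.mp hle J (fun j hj => by simp [hh, hj])
          simp only [hh, if_neg (lt_irrefl J), if_pos rfl] at this
          exact absurd this (not_le.mpr (hVlt M₀ hM₀V))

end Approx2

section Extender
variable {A Q : Type*} [LinearOrder A]

lemma inf_extender (M : PDFA A Q) {ginf : Q → CStr A}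
    (hinf : ∀ u, IsColexGLB (CStr.ofList '' M.I u) (ginf u))
    {u : Q} {w : List A} (hw : w ∈ M.I u) {J i : ℕ}
    (hagree : ∀ k, k < J → CStr.ofList w k = ginf u k)
    (hiw : i ≤ w.length) (hiJ : i ≤ J) :
    ∃ v : Q, ∀ k, k < J - i → ginf v k = ginf u (k + i) := by
  set γ := ginf u with hγ
  set y := w.take (w.length - i) with hy
  set x := w.drop (w.length - i) with hx
  have hyx : y ++ x = w := List.take_append_drop _ w
  have hxlen : x.length = i := by
    rw [hx, List.length_drop]; omega
  have hw' : M.δStar M.start (y ++ x) = some u := by rw [hyx]; exact hw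
  rw [δStar_append] at hw'
  obtain ⟨v, hv1, hv2⟩ := Option.bind_eq_some_iff.mp hw'
  refine ⟨v, ?_⟩
  have hagi : ∀ k, k < i → γ k = CStr.ofList x k := by
    intro k hk
    rw [← hagree k (lt_of_lt_of_le hk hiJ), ← hyx, ofList_append_low (by omega)]
  have hlow : ∀ z ∈ M.I v, colexLe (fun k => γ (k + i)) (CStr.ofList z) := by
    intro z hz
    have hzx : z ++ x ∈ M.I u := by
      show M.δStar M.start (z ++ x) = some u
      rw [δStar_append, hz]
      exact hv2
    have hle : colexLe γ (CStr.ofList (z ++ x)) := (hinf u).2.1 _ ⟨z ++ x, hzx, rfl⟩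
    have hag : ∀ k, k < i → γ k = CStr.ofList (z ++ x) k := by
      intro k hk
      rw [hagi k hk, ofList_append_low (by omega)]
    have := colexLe_drop hle hag
    have heq : (fun k => CStr.ofList (z ++ x) (k + i)) = CStr.ofList z := by
      funext k
      rw [show k + i = k + x.length by omega, ofList_append_high]
    rwa [heq] at this
  have hdrople : colexLe (fun k => γ (k + i)) (ginf v) := by
    refine (hinf v).2.2 _ (drop_wf (hinf u).1 i) ?_
    rintro _ ⟨z, hz, rfl⟩
    exact hlow z hz
  have hvley : colexLe (ginf v) (CStr.ofList y) := (hinf v).2.1 _ ⟨y, hv1, rfl⟩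
  have hagy : ∀ k, k < J - i → γ (k + i) = CStr.ofList y k := by
    intro k hk
    rw [← hagree (k + i) (by omega), ← hyx]
    rw [show k + i = k + x.length by omega, ofList_append_high]
  exact fun k hk => colex_sandwich hdrople hvley hagy k hk

lemma sup_extender (M : PDFA A Q) {gsup : Q → CStr A}
    (hsup : ∀ u, IsColexLUB (CStr.ofList '' M.I u) (gsup u))
    {u : Q} {w : List A} (hw : w ∈ M.I u) {J i : ℕ}
    (hagree : ∀ k, k < J → CStr.ofList w k = gsup u k)
    (hiw : i ≤ w.length) (hiJ : i ≤ J) :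
    ∃ v : Q, ∀ k, k < J - i → gsup v k = gsup u (k + i) := by
  set γ := gsup u with hγ
  set y := w.take (w.length - i) with hy
  set x := w.drop (w.length - i) with hx
  have hyx : y ++ x = w := List.take_append_drop _ w
  have hxlen : x.length = i := by
    rw [hx, List.length_drop]; omega
  have hw' : M.δStar M.start (y ++ x) = some u := by rw [hyx]; exact hw
  rw [δStar_append] at hw'
  obtain ⟨v, hv1, hv2⟩ := Option.bind_eq_some_iff.mp hw'
  refine ⟨v, ?_⟩
  have hagi : ∀ k, k < i → γ k = CStr.ofList x k := by
    intro k hk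
    rw [← hagree k (lt_of_lt_of_le hk hiJ), ← hyx, ofList_append_low (by omega)]
  have hlow : ∀ z ∈ M.I v, colexLe (CStr.ofList z) (fun k => γ (k + i)) := by
    intro z hz
    have hzx : z ++ x ∈ M.I u := by
      show M.δStar M.start (z ++ x) = some u
      rw [δStar_append, hz]
      exact hv2
    have hle : colexLe (CStr.ofList (z ++ x)) γ := (hsup u).2.1 _ ⟨z ++ x, hzx, rfl⟩
    have hag : ∀ k, k < i → CStr.ofList (z ++ x) k = γ k := by
      intro k hk
      rw [hagi k hk, ofList_append_low (by omega)]
    have := colexLe_drop hle hag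
    have heq : (fun k => CStr.ofList (z ++ x) (k + i)) = CStr.ofList z := by
      funext k
      rw [show k + i = k + x.length by omega, ofList_append_high]
    rwa [heq] at this
  have hdrople : colexLe (gsup v) (fun k => γ (k + i)) := by
    refine (hsup v).2.2 _ (drop_wf (hsup u).1 i) ?_
    rintro _ ⟨z, hz, rfl⟩
    exact hlow z hz
  have hvley : colexLe (CStr.ofList y) (gsup v) := (hsup v).2.1 _ ⟨y, hv1, rfl⟩
  have hagy : ∀ k, k < J - i → CStr.ofList y k = γ (k + i) := by
    intro k hk
    rw [← hagree (k + i) (by omega), ← hyx]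
    rw [show k + i = k + x.length by omega, ofList_append_high]
  intro k hk
  have := colex_sandwich hvley hdrople hagy k hk
  rw [this, hagy k hk]

end Extender

section Periodic
variable {A Q : Type*} [LinearOrder A] [Fintype Q]

lemma long_periodic (M : PDFA A Q) (g : Q → CStr A)
    (hWF : ∀ u, (g u).WF)
    (happrox : ∀ u : Q, ∀ J : ℕ, ∃ w ∈ M.I u, ∀ k, k < J → CStr.ofList w k = g u k)
    (hext : ∀ u : Q, ∀ w ∈ M.I u, ∀ J i : ℕ,
      (∀ k, k < J → CStr.ofList w k = g u k) → i ≤ w.length → i ≤ J →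
      ∃ v : Q, ∀ k, k < J - i → g v k = g u (k + i))
    (u : Q)
    (hlong : ∀ k, k < 2 * Fintype.card Q → g u k ≠ ⊥) :
    (∀ k, g u k ≠ ⊥) ∧
      ∃ s p : ℕ, 0 < p ∧ s + p ≤ Fintype.card Q ∧
        ∀ k, s ≤ k → g u (k + p) = g u k := by
  classical
  set n := Fintype.card Q with hn
  have hn1 : 1 ≤ n := Fintype.card_pos_iff.mpr ⟨u⟩
  -- Part 1: g u is infinite
  have hinfstr : ∀ k, g u k ≠ ⊥ := by
    by_contra hc
    push_neg at hc
    obtain ⟨k₀, hk₀⟩ := hc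
    have hbot : ∃ k, g u k = ⊥ := ⟨k₀, hk₀⟩
    set L := Nat.find hbot with hL
    have hLbot : g u L = ⊥ := Nat.find_spec hbot
    have hLmin : ∀ k, k < L → g u k ≠ ⊥ := fun k hk => Nat.find_min hbot hk
    have hL2n : 2 * n ≤ L := by
      by_contra hcon
      exact hlong L (by omega) hLbot
    obtain ⟨w, hw, hwa⟩ := happrox u (L + 1)
    have hwlen : w.length = L := by
      have h1 : CStr.ofList w L = ⊥ := (hwa L (by omega)).trans hLbot
      have h2 : CStr.ofList w (L - 1) ≠ ⊥ := by
        rw [hwa (L - 1) (by omega)]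
        exact hLmin (L - 1) (by omega)
      rw [ofList_eq_bot_iff] at h1
      rw [Ne, ofList_eq_bot_iff] at h2
      omega
    have hwall : ∀ k, CStr.ofList w k = g u k := by
      intro k
      rcases lt_or_ge k (L + 1) with hk | hk
      · exact hwa k hk
      · rw [wf_bot_mono ofList_wf ((hwa L (by omega)).trans hLbot) (by omega),
          wf_bot_mono (hWF u) hLbot (by omega)]
    have hvex : ∀ i : Fin (n + 1), ∃ v : Q,
        ∀ k, k < L + n + 1 - (i : ℕ) → g v k = g u (k + (i : ℕ)) :=
      fun i => hext u w hw (L + n + 1) i (fun k _ => hwall k)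
        (by have := i.isLt; omega) (by have := i.isLt; omega)
    choose vf hvf using hvex
    have key : ∀ i j : Fin (n + 1), vf i = vf j → (i : ℕ) < (j : ℕ) → False := by
      intro i j hij hlt
      have hi := i.isLt
      have hj := j.isLt
      have h1 : g (vf i) (L - j) = g u ((L - (j : ℕ)) + (i : ℕ)) :=
        hvf i (L - j) (by omega)
      have h2 : g (vf j) (L - j) = g u ((L - (j : ℕ)) + (j : ℕ)) :=
        hvf j (L - j) (by omega)
      rw [hij, h2, show (L - (j : ℕ)) + (j : ℕ) = L by omega] at h1
      exact hLmin _ (by omega) (h1 ▸ hLbot)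
    obtain ⟨i, j, hne, hij⟩ :=
      Fintype.exists_ne_map_eq_of_card_lt vf (by simp [hn])
    rcases Ne.lt_or_gt (Fin.val_ne_of_ne hne) with h | h
    · exact key i j hij h
    · exact key j i hij.symm h
  refine ⟨hinfstr, ?_⟩
  -- Part 2: periodicity
  have hvex : ∀ i : Fin (n + 1), ∃ v : Q, ∀ k, g v k = g u (k + (i : ℕ)) := by
    intro i
    have hFm : ∀ m : ℕ, ∃ v : Q, ∀ k, k < m + 1 → g v k = g u (k + (i : ℕ)) := by
      intro m
      obtain ⟨w, hw, hwa⟩ := happrox u (m + (i : ℕ) + 1)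
      have hwlen : (i : ℕ) ≤ w.length := by
        have h1 : CStr.ofList w (m + (i : ℕ)) ≠ ⊥ := by
          rw [hwa _ (by omega)]
          exact hinfstr _
        rw [Ne, ofList_eq_bot_iff] at h1
        omega
      obtain ⟨v, hv⟩ := hext u w hw (m + (i : ℕ) + 1) i hwa hwlen (by omega)
      exact ⟨v, fun k hk => hv k (by omega)⟩
    choose F hF using hFm
    obtain ⟨v, hvfib⟩ := Finite.exists_infinite_fiber F
    have hset : (F ⁻¹' {v}).Infinite := Set.infinite_coe_iff.mp hvfib
    refine ⟨v, fun k => ?_⟩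
    obtain ⟨m, hm1, hm2⟩ := ((hset.diff (Set.finite_le_nat k)).nonempty)
    have hFm : F m = v := hm1
    have hmk : k < m + 1 := by
      simp only [Set.mem_setOf_eq, not_le] at hm2
      omega
    rw [← hFm]
    exact hF m k hmk
  choose vf hvf using hvex
  have key : ∀ i j : Fin (n + 1), vf i = vf j → (i : ℕ) < (j : ℕ) →
      ∃ s p : ℕ, 0 < p ∧ s + p ≤ n ∧ ∀ k, s ≤ k → g u (k + p) = g u k := by
    intro i j hij hlt
    have hj := j.isLt
    refine ⟨(i : ℕ), (j : ℕ) - (i : ℕ), by omega, by omega, ?_⟩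
    intro k hk
    have h1 : g (vf i) (k - (i : ℕ)) = g u ((k - (i : ℕ)) + (i : ℕ)) := hvf i _
    have h2 : g (vf j) (k - (i : ℕ)) = g u ((k - (i : ℕ)) + (j : ℕ)) := hvf j _
    rw [hij, h2] at h1
    rw [show (k - (i : ℕ)) + (i : ℕ) = k by omega,
      show (k - (i : ℕ)) + (j : ℕ) = k + ((j : ℕ) - (i : ℕ)) by omega] at h1
    exact h1
  obtain ⟨i, j, hne, hij⟩ :=
    Fintype.exists_ne_map_eq_of_card_lt vf (by simp [hn])
  rcases Ne.lt_or_gt (Fin.val_ne_of_ne hne) with h | h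
  · exact key i j hij h
  · exact key j i hij.symm h

end Periodic

lemma two_period {C : Type*} {γ γ' : ℕ → C} {n s p t q : ℕ}
    (hp0 : 0 < p) (hq0 : 0 < q) (hpn : s + p ≤ n) (hqn : t + q ≤ n)
    (hp : ∀ k, s ≤ k → γ (k + p) = γ k) (hq : ∀ k, t ≤ k → γ' (k + q) = γ' k)
    (hagree : ∀ k, k < 2 * n → γ k = γ' k) :
    ∀ k, γ k = γ' k := by
  have claim1 : ∀ k, t ≤ k → γ (k + q) = γ k := by
    intro k
    induction k using Nat.strong_induction_on with
    | _ k ih =>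
      intro hk
      rcases lt_or_ge (k + q) (2 * n) with h1 | h1
      · rw [hagree (k + q) h1, hagree k (by omega), hq k hk]
      · have e1 : γ (k + q) = γ ((k - p + q) + p) := by congr 1; omega
        have e2 : γ ((k - p + q) + p) = γ (k - p + q) := hp _ (by omega)
        have e3 : γ (k - p + q) = γ (k - p) := ih (k - p) (by omega) (by omega)
        have e4 : γ (k - p) = γ ((k - p) + p) := (hp _ (by omega)).symm
        rw [e1, e2, e3, e4]
        congr 1
        omega
  intro k
  induction k using Nat.strong_induction_on with
  | _ k ih =>
    rcases lt_or_ge k (2 * n) with h1 | h1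
    · exact hagree k h1
    · have e1 : γ k = γ ((k - q) + q) := by congr 1; omega
      rw [e1, claim1 _ (by omega), ih (k - q) (by omega), ← hq _ (by omega)]
      congr 1
      omega

/-- For a DFA with `n = |Q|` states whose initial state has
no incoming transitions and all of whose states are reachable, the co-lex
order of any two strings in `{inf I_u : u ∈ Q} ∪ {sup I_u : u ∈ Q}` is the
same as the co-lex order of their length-`2n` suffixes. -/
theorem infimum_supremum_colex_order_determined_by_2n_suffix
    {A Q : Type*} [LinearOrder A] [Fintype A] [Fintype Q]
    (M : PDFA A Q) (hstart : M.NoIncomingStart) (hreach : M.Reachable)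
    (ginf gsup : Q → CStr A)
    (hinf : ∀ u, IsColexGLB (CStr.ofList '' M.I u) (ginf u))
    (hsup : ∀ u, IsColexLUB (CStr.ofList '' M.I u) (gsup u))
    (α β : CStr A)
    (hα : (∃ u, α = ginf u) ∨ (∃ u, α = gsup u))
    (hβ : (∃ u, β = ginf u) ∨ (∃ u, β = gsup u)) :
    colexLt α β ↔
      colexLt (CStr.suf (2 * Fintype.card Q) α) (CStr.suf (2 * Fintype.card Q) β) := by
  classical
  set n := Fintype.card Q with hn
  have hne : ∀ u : Q, (M.I u).Nonempty := fun u => hreach u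
  have hWFα : α.WF := by
    rcases hα with ⟨u, rfl⟩ | ⟨u, rfl⟩
    exacts [(hinf u).1, (hsup u).1]
  have hWFβ : β.WF := by
    rcases hβ with ⟨u, rfl⟩ | ⟨u, rfl⟩
    exacts [(hinf u).1, (hsup u).1]
  have hkey : ∀ γ : CStr A, ((∃ u, γ = ginf u) ∨ (∃ u, γ = gsup u)) →
      (∀ k, k < 2 * n → γ k ≠ ⊥) →
      (∀ k, γ k ≠ ⊥) ∧ ∃ s p : ℕ, 0 < p ∧ s + p ≤ n ∧
        ∀ k, s ≤ k → γ (k + p) = γ k := by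
    rintro γ (⟨u, rfl⟩ | ⟨u, rfl⟩) hlong
    · exact long_periodic M ginf (fun v => (hinf v).1)
        (fun v J => glb_approx M (hinf v) (hne v) J)
        (fun v w hw J i h1 h2 h3 => inf_extender M hinf hw h1 h2 h3) u hlong
    · exact long_periodic M gsup (fun v => (hsup v).1)
        (fun v J => lub_approx M (hsup v) (hne v) J)
        (fun v w hw J i h1 h2 h3 => sup_extender M hsup hw h1 h2 h3) u hlong
  constructor
  · rintro ⟨i, hj, hi⟩
    rcases lt_or_ge i (2 * n) with h2n | h2n
    · refine ⟨i, fun j hji => ?_, ?_⟩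
      · simp only [CStr.suf, if_pos (by omega : j < 2 * n)]
        exact hj j hji
      · simp only [CStr.suf, if_pos h2n]
        exact hi
    · exfalso
      have hagree : ∀ k, k < 2 * n → α k = β k := fun k hk => hj k (by omega)
      by_cases hbot : ∃ k, k < 2 * n ∧ α k = ⊥
      · obtain ⟨k, hk, hkb⟩ := hbot
        have h1 : α i = ⊥ := wf_bot_mono hWFα hkb (by omega)
        have h2 : β i = ⊥ := wf_bot_mono hWFβ ((hagree k hk).symm.trans hkb) (by omega)
        rw [h1, h2] at hi
        exact lt_irrefl _ hi
      · push_neg at hbot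
        have hlongβ : ∀ k, k < 2 * n → β k ≠ ⊥ :=
          fun k hk => (hagree k hk) ▸ hbot k hk
        obtain ⟨-, s, p, hp0, hpn, hp⟩ := hkey α hα hbot
        obtain ⟨-, t, q, hq0, hqn, hq⟩ := hkey β hβ hlongβ
        have := two_period hp0 hq0 hpn hqn hp hq hagree i
        rw [this] at hi
        exact lt_irrefl _ hi
  · rintro ⟨i, hj, hi⟩
    have h2n : i < 2 * n := by
      by_contra h
      simp only [CStr.suf, if_neg h] at hi
      exact lt_irrefl _ hi
    refine ⟨i, fun j hji => ?_, ?_⟩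
    · have := hj j hji
      simpa only [CStr.suf, if_pos (by omega : j < 2 * n)] using this
    · simpa only [CStr.suf, if_pos h2n] using hi
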